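/- arXiv:1902.07384 — 5 statements merged into one kernel-verified Lean document; each statement's English description precedes it below -/
import Mathlib

section
/- The ideal Γ equals the kernel of φ; that is, Γ = Γ':h^∞ is the defining ideal of the multi-Rees algebra R[I_1 t_1,…,I_s t_s] presented by the variables Y_{ij} ↦ f_{ij}T_i. -/
/-!
Modulo `Γ'`, and after inverting `h`, every `Y i j` is congruent to `Y i 0 * f i j / f i 0`.
Hence every polynomial, multiplied by a suitable power of `h`, is congruent modulo `Γ'` to a
polynomial in the `X`'s and the pivot variables `Y i 0` alone. On that subring `φ` is the
substitution `Y i 0 ↦ f i 0 * T i`, which is injective because the `f i 0` are nonzero (over the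
fraction field of `k[X]` it is inverted by `T i ↦ T i / f i 0`). So an element of the kernel is
killed by a power of `h` modulo `Γ'`; conversely `Γ' ⊆ ker φ` and `φ h ≠ 0`.
-/

open MvPolynomial

section ModAway

variable {R A : Type*} [CommRing R] [CommRing A] [Algebra R A]

def Subalgebra.modAway (B : Subalgebra R A) (J : Ideal A) {h : A} (hB : h ∈ B) :
    Subalgebra R A where
  carrier := {g | ∃ N : ℕ, ∃ b ∈ B, h ^ N * g - b ∈ J}
  mul_mem' := by
    rintro g g' ⟨N, b, hb, hg⟩ ⟨N', b', hb', hg'⟩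
    refine ⟨N + N', b * b', B.mul_mem hb hb', ?_⟩
    have : h ^ (N + N') * (g * g') - b * b' =
        h ^ N' * g' * (h ^ N * g - b) + b * (h ^ N' * g' - b') := by ring
    rw [this]
    exact J.add_mem (J.mul_mem_left _ hg) (J.mul_mem_left _ hg')
  add_mem' := by
    rintro g g' ⟨N, b, hb, hg⟩ ⟨N', b', hb', hg'⟩
    have hpow (M : ℕ) : h ^ M ∈ B := B.pow_mem hB M
    refine ⟨N + N', h ^ N' * b + h ^ N * b',
      B.add_mem (B.mul_mem (hpow N') hb) (B.mul_mem (hpow N) hb'), ?_⟩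
    have : h ^ (N + N') * (g + g') - (h ^ N' * b + h ^ N * b') =
        h ^ N' * (h ^ N * g - b) + h ^ N * (h ^ N' * g' - b') := by ring
    rw [this]
    exact J.add_mem (J.mul_mem_left _ hg) (J.mul_mem_left _ hg')
  algebraMap_mem' r := ⟨0, algebraMap R A r, B.algebraMap_mem r, by simp⟩

theorem Subalgebra.le_modAway (B : Subalgebra R A) (J : Ideal A) {h : A} (hB : h ∈ B) :
    B ≤ B.modAway J hB :=
  fun g hg => ⟨0, g, hg, by simp⟩

theorem Subalgebra.mem_ker_iff_exists_pow_mul_mem {C : Type*} [CommRing C] [NoZeroDivisors C]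
    (φ : A →+* C) {B : Subalgebra R A} {J : Ideal A} {h : A} (hB : h ∈ B)
    (htop : B.modAway J hB = ⊤) (hJ : J ≤ RingHom.ker φ) (hφh : φ h ≠ 0)
    (hinj : Set.InjOn φ B) (g : A) :
    g ∈ RingHom.ker φ ↔ ∃ N : ℕ, h ^ N * g ∈ J := by
  refine ⟨fun hg => ?_, fun ⟨N, hN⟩ => ?_⟩
  · obtain ⟨N, b, hb, hNb⟩ : g ∈ B.modAway J hB := htop ▸ Algebra.mem_top
    have hφb : φ b = φ 0 := by
      simpa [RingHom.mem_ker.mp hg, sub_eq_zero, eq_comm] using hJ hNb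
    rw [hinj hb B.zero_mem hφb, sub_zero] at hNb
    exact ⟨N, hNb⟩
  · have hφ : φ h ^ N * φ g = 0 := by simpa using hJ hN
    exact (mul_eq_zero.mp hφ).resolve_left (pow_ne_zero N hφh)

end ModAway

theorem MvPolynomial.aeval_C_mul_X_injective {R ι : Type*} [CommRing R] [IsDomain R]
    {c : ι → R} (hc : ∀ i, c i ≠ 0) :
    Function.Injective
      (aeval fun i => C (c i) * X i : MvPolynomial ι R →ₐ[R] MvPolynomial ι R) := by
  let K := FractionRing R
  have hR : Function.Injective (algebraMap R K) := IsFractionRing.injective R K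
  let unscale : MvPolynomial ι K →ₐ[K] MvPolynomial ι K :=
    aeval fun i => C (algebraMap R K (c i))⁻¹ * X i
  have hunscale (p : MvPolynomial ι R) :
      unscale (map (algebraMap R K) (aeval (fun i => C (c i) * X i) p)) =
        map (algebraMap R K) p := by
    induction p using MvPolynomial.induction_on with
    | C a => simp [unscale]
    | add p q hp hq => simp only [map_add, hp, hq]
    | mul_X p i hp =>
      have hci : algebraMap R K (c i) ≠ 0 := (map_ne_zero_iff _ hR).mpr (hc i)
      have hCinv : C (algebraMap R K (c i)) * C (algebraMap R K (c i))⁻¹ =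
          (1 : MvPolynomial ι K) := by
        rw [← map_mul, mul_inv_cancel₀ hci, map_one]
      simp only [map_mul, hp, aeval_X, map_C, map_X, aeval_C, algebraMap_eq, unscale]
      linear_combination (map (algebraMap R K) p * X i) * hCinv
  exact fun p q hpq => map_injective _ hR <| by
    simpa only [hunscale] using congrArg (fun r => unscale (map (algebraMap R K) r)) hpq

theorem MvPolynomial.aeval_sumElim_rename_mul_X_injective {k σ ι : Type*} [CommRing k]
    [IsDomain k] {c : ι → MvPolynomial σ k} (hc : ∀ i, c i ≠ 0) :
    Function.Injective (aeval (Sum.elim (fun x => X (Sum.inl x))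
      fun i => rename Sum.inl (c i) * X (Sum.inr i)) :
        MvPolynomial (σ ⊕ ι) k →ₐ[k] MvPolynomial (σ ⊕ ι) k) := by
  let E := (renameEquiv k (Equiv.sumComm σ ι)).trans (sumAlgEquiv k ι σ)
  have hrename (p : MvPolynomial σ k) : E (rename Sum.inl p) = C p := by
    simp only [E, AlgEquiv.trans_apply, renameEquiv_apply, rename_rename]
    exact DFunLike.congr_fun (sumAlgEquiv_comp_rename_inr k ι σ) p
  have hXl (x : σ) : E (X (Sum.inl x)) = C (X x) := by simp [E]
  have hXr (i : ι) : E (X (Sum.inr i)) = X i := by simp [E]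
  have hE : E.toAlgHom.comp (aeval (Sum.elim (fun x => X (Sum.inl x))
      fun i => rename Sum.inl (c i) * X (Sum.inr i))) =
        ((aeval fun i => C (c i) * X i).restrictScalars k).comp E.toAlgHom := by
    refine algHom_ext fun v => ?_
    rcases v with x | i <;> simp [hrename, hXl, hXr]
  refine Function.Injective.of_comp (f := E) ?_
  have hcomm := congrArg DFunLike.coe hE
  simp only [AlgHom.coe_comp, AlgEquiv.coe_toAlgHom, AlgHom.coe_restrictScalars'] at hcomm
  rw [hcomm]
  exact (aeval_C_mul_X_injective hc).comp E.injective

namespace MultiRees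

variable {k σ ι : Type*} {κ : ι → Type*} [CommRing k] (f : (i : ι) → κ i → MvPolynomial σ k)

noncomputable def presentation : MvPolynomial (σ ⊕ Σ i, κ i) k →ₐ[k] MvPolynomial (σ ⊕ ι) k :=
  aeval (Sum.elim (fun x => X (Sum.inl x)) fun p => rename Sum.inl (f p.1 p.2) * X (Sum.inr p.1))

noncomputable def linearIdeal : Ideal (MvPolynomial (σ ⊕ Σ i, κ i) k) :=
  Ideal.span {g | ∃ (i : ι) (j j' : κ i), g = X (Sum.inr ⟨i, j⟩) * rename Sum.inl (f i j')
    - X (Sum.inr ⟨i, j'⟩) * rename Sum.inl (f i j)}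

/-- Identifies `k[X, T]` with the subring `k[X, Y i (j₀ i)]` generated by the pivot variables. -/
def pivot (j₀ : ∀ i, κ i) : σ ⊕ ι → σ ⊕ Σ i, κ i :=
  Sum.map id fun i => ⟨i, j₀ i⟩

@[simp]
theorem presentation_rename_inl (p : MvPolynomial σ k) :
    presentation f (rename Sum.inl p) = rename Sum.inl p := by
  rw [presentation, aeval_rename, Sum.elim_comp_inl, rename_eq_aeval]
  rfl

@[simp]
theorem presentation_X_inl (x : σ) : presentation f (X (Sum.inl x)) = X (Sum.inl x) :=
  aeval_X _ _

@[simp]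
theorem presentation_X_inr (i : ι) (j : κ i) :
    presentation f (X (Sum.inr ⟨i, j⟩)) = rename Sum.inl (f i j) * X (Sum.inr i) :=
  aeval_X _ _

theorem linearIdeal_le_ker : linearIdeal f ≤ RingHom.ker (presentation f) := by
  rw [linearIdeal, Ideal.span_le]
  rintro _ ⟨i, j, j', rfl⟩
  simp only [SetLike.mem_coe, RingHom.mem_ker, map_sub, map_mul, presentation_rename_inl,
    presentation_X_inr]
  ring

theorem presentation_comp_rename_pivot (j₀ : ∀ i, κ i) :
    (presentation f).comp (rename (pivot j₀)) = aeval (Sum.elim (fun x => X (Sum.inl x))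
      fun i => rename Sum.inl (f i (j₀ i)) * X (Sum.inr i)) := by
  refine algHom_ext fun v => ?_
  rcases v with x | i <;> simp [pivot]

theorem injOn_presentation_range_rename_pivot [IsDomain k] {j₀ : ∀ i, κ i}
    (hf : ∀ i, f i (j₀ i) ≠ 0) :
    Set.InjOn (presentation f)
      (rename (pivot j₀) : _ →ₐ[k] MvPolynomial (σ ⊕ Σ i, κ i) k).range := by
  rintro _ ⟨p, rfl⟩ _ ⟨q, rfl⟩ hpq
  have hinj := aeval_sumElim_rename_mul_X_injective (ι := ι) hf
  rw [← presentation_comp_rename_pivot] at hinj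
  exact congrArg _ (hinj hpq)

theorem rename_inl_mem_range_rename_pivot (j₀ : ∀ i, κ i) (p : MvPolynomial σ k) :
    rename Sum.inl p ∈ (rename (pivot j₀) : _ →ₐ[k] MvPolynomial (σ ⊕ Σ i, κ i) k).range :=
  (AlgHom.mem_range _).mpr ⟨rename Sum.inl p, (rename_rename _ _ _).trans rfl⟩

theorem X_pivot_mem_range_rename_pivot (j₀ : ∀ i, κ i) (i : ι) :
    X (Sum.inr ⟨i, j₀ i⟩) ∈ (rename (pivot j₀) : _ →ₐ[k] MvPolynomial (σ ⊕ Σ i, κ i) k).range :=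
  (AlgHom.mem_range _).mpr ⟨X (Sum.inr i), rename_X _ _⟩

variable [Fintype ι]

theorem prod_mem_range_rename_pivot (j₀ : ∀ i, κ i) :
    ∏ i, rename Sum.inl (f i (j₀ i)) ∈
      (rename (pivot j₀) : _ →ₐ[k] MvPolynomial (σ ⊕ Σ i, κ i) k).range :=
  Subalgebra.prod_mem _ fun _ _ => rename_inl_mem_range_rename_pivot j₀ _

theorem modAway_range_rename_pivot_eq_top (j₀ : ∀ i, κ i) :
    (rename (pivot j₀)).range.modAway (linearIdeal f) (prod_mem_range_rename_pivot f j₀) = ⊤ := by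
  classical
  rw [eq_top_iff, ← adjoin_range_X, Algebra.adjoin_le_iff]
  rintro _ ⟨x | ⟨i, j⟩, rfl⟩
  · exact Subalgebra.le_modAway _ _ _ ((AlgHom.mem_range _).mpr ⟨X (Sum.inl x), rename_X _ _⟩)
  · set rest : MvPolynomial (σ ⊕ Σ i, κ i) k :=
      ∏ i' ∈ Finset.univ.erase i, rename Sum.inl (f i' (j₀ i'))
    have hsplit : ∏ i, rename Sum.inl (f i (j₀ i)) = rename Sum.inl (f i (j₀ i)) * rest :=
      (Finset.mul_prod_erase _ _ (Finset.mem_univ i)).symm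
    refine ⟨1, X (Sum.inr ⟨i, j₀ i⟩) * rename Sum.inl (f i j) * rest, ?_, ?_⟩
    · exact Subalgebra.mul_mem _
        (Subalgebra.mul_mem _ (X_pivot_mem_range_rename_pivot j₀ i)
          (rename_inl_mem_range_rename_pivot j₀ _))
        (Subalgebra.prod_mem _ fun _ _ => rename_inl_mem_range_rename_pivot j₀ _)
    · have hgen : X (Sum.inr ⟨i, j⟩) * rename Sum.inl (f i (j₀ i))
          - X (Sum.inr ⟨i, j₀ i⟩) * rename Sum.inl (f i j) ∈ linearIdeal f :=
        Ideal.subset_span ⟨i, j, j₀ i, rfl⟩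
      rw [hsplit]
      convert (linearIdeal f).mul_mem_left rest hgen using 1
      ring

end MultiRees

/-- Theorem (Cox–Lin–Sosa, generalized): the saturation `Γ = Γ' : h^∞` equals the kernel of
the presentation map `φ` of the multi-Rees algebra, where `φ (Y i j) = f i j * T i`. -/
theorem defining_ideal_of_multiRees
    (k : Type*) [Field k] (m s : ℕ) (n : Fin s → ℕ)
    (f : (i : Fin s) → Fin (n i + 1) → MvPolynomial (Fin m) k)
    (hf : ∀ i, f i 0 ≠ 0)
    (φ : MvPolynomial (Fin m ⊕ (Σ i : Fin s, Fin (n i + 1))) k →ₐ[k]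
         MvPolynomial (Fin m ⊕ Fin s) k)
    (hφ : φ = aeval (Sum.elim (fun i => X (Sum.inl i))
        (fun p => rename Sum.inl (f p.1 p.2) * X (Sum.inr p.1))))
    (Γ' : Ideal (MvPolynomial (Fin m ⊕ (Σ i : Fin s, Fin (n i + 1))) k))
    (hΓ' : Γ' = Ideal.span { g | ∃ (i : Fin s) (j j' : Fin (n i + 1)),
        g = X (Sum.inr ⟨i, j⟩) * rename Sum.inl (f i j')
          - X (Sum.inr ⟨i, j'⟩) * rename Sum.inl (f i j) })
    (h : MvPolynomial (Fin m ⊕ (Σ i : Fin s, Fin (n i + 1))) k)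
    (hh : h = ∏ i, rename Sum.inl (f i 0)) :
    ∀ g, g ∈ RingHom.ker φ.toRingHom ↔ ∃ N : ℕ, h ^ N * g ∈ Γ' := by
  subst hφ hΓ' hh
  have hφh : MultiRees.presentation f (∏ i, rename Sum.inl (f i 0)) ≠ 0 := by
    simpa [Finset.prod_ne_zero_iff, map_ne_zero_iff _ (rename_injective _ Sum.inl_injective)]
      using hf
  exact Subalgebra.mem_ker_iff_exists_pow_mul_mem (MultiRees.presentation f).toRingHom
    (MultiRees.prod_mem_range_rename_pivot f _) (MultiRees.modAway_range_rename_pivot_eq_top f _)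
    (MultiRees.linearIdeal_le_ker f) hφh (MultiRees.injOn_presentation_range_rename_pivot f hf)
end

section
/- For every polynomial f ∈ k[X_1,…,X_m, Y] there exist an integer N ≥ 0, polynomials d_{ij} ∈ k[X_1,…,X_m, Y] (for 1 ≤ i ≤ s, 2 ≤ j ≤ n_i), and a polynomial r' ∈ k[X_1,…,X_m, Y_{11},…,Y_{s1}] such that h^N · f = Σ_{i=1}^s Σ_{j=2}^{n_i} d_{ij} (Y_{ij} f_{i1} − Y_{i1} f_{ij}) + r'. -/
open MvPolynomial

/-- For every `g ∈ k[X, Y]` there are `N`, coefficients `d i j`, and a polynomial `r'`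
in the variables `X₁,…,X_m, Y_{11},…,Y_{s1}` only, with
`h ^ N * g = ∑ i ∑ j d i j * (Y i j * f i 1 - Y i 1 * f i j) + r'`. -/
theorem clearing_denominators
    (k : Type*) [Field k] (m s : ℕ) (n : Fin s → ℕ)
    (f : (i : Fin s) → Fin (n i + 1) → MvPolynomial (Fin m) k)
    (hf : ∀ i, f i 0 ≠ 0)
    (h : MvPolynomial (Fin m ⊕ (Σ i : Fin s, Fin (n i + 1))) k)
    (hh : h = ∏ i, rename Sum.inl (f i 0))
    (ι : (Fin m ⊕ Fin s) → (Fin m ⊕ (Σ i : Fin s, Fin (n i + 1))))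
    (hι : ι = Sum.map id (fun i => ⟨i, 0⟩)) :
    ∀ g : MvPolynomial (Fin m ⊕ (Σ i : Fin s, Fin (n i + 1))) k,
      ∃ (N : ℕ)
        (d : (i : Fin s) → Fin (n i + 1) →
          MvPolynomial (Fin m ⊕ (Σ i : Fin s, Fin (n i + 1))) k)
        (r : MvPolynomial (Fin m ⊕ Fin s) k),
        h ^ N * g =
          (∑ i : Fin s, ∑ j : Fin (n i + 1),
            d i j * (X (Sum.inr ⟨i, j⟩) * rename Sum.inl (f i 0)
              - X (Sum.inr ⟨i, 0⟩) * rename Sum.inl (f i j)))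
          + rename ι r := by
  classical
  intro g
  -- the relations
  set rel : (Σ i : Fin s, Fin (n i + 1)) →
      MvPolynomial (Fin m ⊕ (Σ i : Fin s, Fin (n i + 1))) k :=
    fun p => X (Sum.inr ⟨p.1, p.2⟩) * rename Sum.inl (f p.1 0)
      - X (Sum.inr ⟨p.1, 0⟩) * rename Sum.inl (f p.1 p.2) with hrel
  set J : Ideal (MvPolynomial (Fin m ⊕ (Σ i : Fin s, Fin (n i + 1))) k) :=
    Ideal.span (Set.range rel) with hJ
  set S : Subalgebra k (MvPolynomial (Fin m ⊕ (Σ i : Fin s, Fin (n i + 1))) k) :=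
    (rename ι : MvPolynomial (Fin m ⊕ Fin s) k →ₐ[k]
      MvPolynomial (Fin m ⊕ (Σ i : Fin s, Fin (n i + 1))) k).range with hS
  -- renaming along ι fixes polynomials in the X variables
  have hcomp : ∀ q : MvPolynomial (Fin m) k,
      rename ι (rename Sum.inl q) = rename Sum.inl q := by
    intro q
    have hcl : ι ∘ Sum.inl = (Sum.inl : Fin m → Fin m ⊕ (Σ i : Fin s, Fin (n i + 1))) := by
      funext x; simp [hι]
    rw [rename_rename, hcl]
  have hXmem : ∀ q : MvPolynomial (Fin m) k, rename Sum.inl q ∈ S := by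
    intro q
    exact ⟨rename Sum.inl q, hcomp q⟩
  have hhmem : h ∈ S := by
    rw [hh]
    exact Subalgebra.prod_mem _ fun i _ => hXmem _
  -- main claim: every g eventually lands in J + S after multiplying by a power of h
  have main : ∀ g : MvPolynomial (Fin m ⊕ (Σ i : Fin s, Fin (n i + 1))) k,
      ∃ (N : ℕ), ∃ a b, a ∈ J ∧ b ∈ S ∧ h ^ N * g = a + b := by
    intro g
    induction g using MvPolynomial.induction_on with
    | C a =>
        exact ⟨0, 0, C a, J.zero_mem, Subalgebra.algebraMap_mem S a, by simp⟩
    | add p q hp hq =>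
        obtain ⟨N1, a1, b1, ha1, hb1, e1⟩ := hp
        obtain ⟨N2, a2, b2, ha2, hb2, e2⟩ := hq
        refine ⟨N1 + N2, h ^ N2 * a1 + h ^ N1 * a2, h ^ N2 * b1 + h ^ N1 * b2,
          J.add_mem (J.mul_mem_left _ ha1) (J.mul_mem_left _ ha2),
          S.add_mem (S.mul_mem (S.pow_mem hhmem _) hb1)
            (S.mul_mem (S.pow_mem hhmem _) hb2), ?_⟩
        have : h ^ (N1 + N2) * (p + q) = h ^ N2 * (h ^ N1 * p) + h ^ N1 * (h ^ N2 * q) := by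
          ring
        rw [this, e1, e2]
        ring
    | mul_X p v hp =>
        obtain ⟨N, a, b, ha, hb, e⟩ := hp
        -- it suffices to deal with h ^ N' * X v
        have key : ∃ (N' : ℕ), ∃ a' b', a' ∈ J ∧ b' ∈ S ∧ h ^ N' * X v = a' + b' := by
          rcases v with x | ⟨i, j⟩
          · exact ⟨0, 0, X (Sum.inl x), J.zero_mem,
              ⟨X (Sum.inl x), by simp [hι]⟩, by simp⟩
          · by_cases hj : j = 0
            · subst hj
              exact ⟨0, 0, X (Sum.inr ⟨i, 0⟩), J.zero_mem,
                ⟨X (Sum.inr i), by simp [hι]⟩, by simp⟩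
            · -- the interesting case
              set c : MvPolynomial (Fin m ⊕ (Σ i : Fin s, Fin (n i + 1))) k :=
                ∏ i' ∈ Finset.univ.erase i, rename Sum.inl (f i' 0) with hc
              have hcS : c ∈ S := Subalgebra.prod_mem _ fun i' _ => hXmem _
              refine ⟨1, c * rel ⟨i, j⟩,
                X (Sum.inr ⟨i, 0⟩) * (c * rename Sum.inl (f i j)),
                J.mul_mem_left _ (Ideal.subset_span ⟨⟨i, j⟩, rfl⟩),
                S.mul_mem ⟨X (Sum.inr i), by simp [hι]⟩ (S.mul_mem hcS (hXmem _)), ?_⟩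
              have hhc : h = rename Sum.inl (f i 0) * c := by
                rw [hh, hc]
                exact (Finset.mul_prod_erase _ _ (Finset.mem_univ i)).symm
              rw [hhc, hrel]
              ring
        obtain ⟨N', a', b', ha', hb', e'⟩ := key
        refine ⟨N + N', a * (h ^ N' * X v) + b * a', b * b',
          J.add_mem (J.mul_mem_right _ ha) (J.mul_mem_left _ ha'),
          S.mul_mem hb hb', ?_⟩
        have : h ^ (N + N') * (p * X v) = (h ^ N * p) * (h ^ N' * X v) := by ring
        rw [this, e, e']
        ring
  obtain ⟨N, a, b, ha, hb, e⟩ := main g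
  rw [hJ] at ha
  obtain ⟨cD, hcD⟩ := (Submodule.mem_span_range_iff_exists_fun _).mp ha
  obtain ⟨r, hr⟩ := hb
  refine ⟨N, fun i j => cD ⟨i, j⟩, r, ?_⟩
  rw [e, ← hcD, ← hr]
  congr 1
  rw [← Finset.univ_sigma_univ, Finset.sum_sigma]
  simp [hrel, smul_eq_mul]
end

section
/- The quotient ring ℚ[x,y,z]/(y^7 + 15x^{14}, 7xy^6, 5z^4) is a ℚ-vector space of dimension 364; that is, the Milnor number of F_0 = z^5 + xy^7 + x^{15} at the origin equals 364. -/
/-!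
Write `J = (y^(b+1) + c x^n, x y^b, z^d)`. Modulo `J` we have `y^(b+1) ≡ -c x^n`, and
`x^(n+1) = (x (y^(b+1) + c x^n) - y (x y^b)) / c`, `x y^b`, `z^d` vanish, so the standard monomials
`x^i y^j z^k` (`i ≤ n`, `j < b`, `k < d`) and `y^b z^k` (`k < d`) span `K[x,y,z]/J`. They are
independent because the linear map that reads off their coefficients, after rewriting every
`y^(b+1+j) z^k` as `-c x^n y^j z^k`, kills `J`. Hence the dimension is
`((n+1) b + 1) d`, which is `364` for `n = 14`, `b = 6`, `d = 4`.
-/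

open MvPolynomial

namespace MilnorNumber

noncomputable def ofTriple (i j k : ℕ) : Fin 3 →₀ ℕ :=
  Finsupp.single 0 i + Finsupp.single 1 j + Finsupp.single 2 k

@[simp] lemma ofTriple_apply_zero (i j k : ℕ) : ofTriple i j k 0 = i := by simp [ofTriple]
@[simp] lemma ofTriple_apply_one (i j k : ℕ) : ofTriple i j k 1 = j := by simp [ofTriple]
@[simp] lemma ofTriple_apply_two (i j k : ℕ) : ofTriple i j k 2 = k := by simp [ofTriple]

lemma ofTriple_apply_self (m : Fin 3 →₀ ℕ) : ofTriple (m 0) (m 1) (m 2) = m := by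
  ext a; fin_cases a <;> simp

@[simp] lemma ofTriple_inj {i j k i' j' k' : ℕ} :
    ofTriple i j k = ofTriple i' j' k' ↔ i = i' ∧ j = j' ∧ k = k' := by
  refine ⟨fun h => ?_, by rintro ⟨rfl, rfl, rfl⟩; rfl⟩
  simpa using congr((⟨$h 0, $h 1, $h 2⟩ : ℕ × ℕ × ℕ))

lemma monomial_ofTriple {R : Type*} [CommSemiring R] (i j k : ℕ) (a : R) :
    monomial (ofTriple i j k) a = C a * (X 0 ^ i * X 1 ^ j * X 2 ^ k) := by
  simp only [ofTriple, X_pow_eq_monomial, monomial_mul, C_mul_monomial, mul_one]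

/-- In characteristic zero and for `c = n + 1` this is, up to unit factors, the Jacobian ideal of
`x^(n+1) + x y^(b+1) + z^(d+1)`. -/
noncomputable def milnorIdeal (K : Type*) [Field K] (n b d : ℕ) (c : K) :
    Ideal (MvPolynomial (Fin 3) K) :=
  Ideal.span {X 1 ^ (b + 1) + C c * X 0 ^ n, X 0 * X 1 ^ b, X 2 ^ d}

/-- `(some (i, j), k)` indexes `x^i y^j z^k` and `(none, k)` indexes `y^b z^k`. -/
abbrev StdIndex (n b d : ℕ) : Type := Option (Fin (n + 1) × Fin b) × Fin d

lemma card_stdIndex (n b d : ℕ) : Fintype.card (StdIndex n b d) = ((n + 1) * b + 1) * d := by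
  simp

noncomputable def stdMonomial (K : Type*) [Field K] (n b d : ℕ) :
    StdIndex n b d → MvPolynomial (Fin 3) K
  | (some (i, j), k) => monomial (ofTriple i j k) 1
  | (none, k) => monomial (ofTriple 0 b k) 1

/-- The coordinate of `x^n y^j z^k` also collects `-c` times the coefficient of
`y^(b+1+j) z^k`, the monomial that reduces to `-c x^n y^j z^k` modulo `milnorIdeal`. -/
noncomputable def normalForm (K : Type*) [Field K] (n b d : ℕ) (c : K) :
    MvPolynomial (Fin 3) K →ₗ[K] (StdIndex n b d → K) :=
  LinearMap.pi fun
    | (some (i, j), k) => lcoeff K (ofTriple i j k) -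
        if (i : ℕ) = n then c • lcoeff K (ofTriple 0 (b + 1 + j) k) else 0
    | (none, k) => lcoeff K (ofTriple 0 b k)

variable {K : Type*} [Field K] {n b d : ℕ} {c : K}

local notation "J" => milnorIdeal K n b d c

section NormalForm

lemma normalForm_monomial_some (i' j' k' : ℕ) (a : K) (i : Fin (n + 1)) (j : Fin b) (k : Fin d) :
    normalForm K n b d c (monomial (ofTriple i' j' k') a) (some (i, j), k) =
      (if i' = i ∧ j' = j ∧ k' = k then a else 0) -
        if (i : ℕ) = n ∧ i' = 0 ∧ j' = b + 1 + j ∧ k' = k then c * a else 0 := by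
  simp only [normalForm, LinearMap.pi_apply, LinearMap.sub_apply, lcoeff_apply, coeff_monomial,
    ofTriple_inj]
  split_ifs <;> simp_all

lemma normalForm_monomial_none (i' j' k' : ℕ) (a : K) (k : Fin d) :
    normalForm K n b d c (monomial (ofTriple i' j' k') a) (none, k) =
      if i' = 0 ∧ j' = b ∧ k' = k then a else 0 := by
  simp [normalForm]

lemma normalForm_mul_eq_zero_of_monomial_mul {g : MvPolynomial (Fin 3) K}
    (h : ∀ i j k, normalForm K n b d c (monomial (ofTriple i j k) 1 * g) = 0)
    (r : MvPolynomial (Fin 3) K) : normalForm K n b d c (r * g) = 0 := by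
  induction r using MvPolynomial.induction_on' with
  | monomial u a =>
    rw [show monomial u a = a • monomial u (1 : K) by rw [smul_monomial, smul_eq_mul, mul_one],
      smul_mul_assoc, map_smul, ← ofTriple_apply_self u, h, smul_zero]
  | add p q hp hq => rw [add_mul, map_add, hp, hq, add_zero]

lemma normalForm_monomial_mul_X_one_pow_add (hn : 1 ≤ n) (i j k : ℕ) :
    normalForm K n b d c (monomial (ofTriple i j k) 1 * (X 1 ^ (b + 1) + C c * X 0 ^ n)) = 0 := by
  have hmul : monomial (ofTriple i j k) 1 * (X 1 ^ (b + 1) + C c * X 0 ^ n) =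
      monomial (ofTriple i (j + (b + 1)) k) 1 + monomial (ofTriple (i + n) j k) c := by
    simp only [monomial_ofTriple, map_one]; ring
  ext ⟨_ | ⟨⟨i', hi'⟩, ⟨j', hj'⟩⟩, ⟨k', hk'⟩⟩ <;>
    simp only [hmul, map_add, Pi.add_apply, Pi.zero_apply, normalForm_monomial_none,
      normalForm_monomial_some] <;>
    split_ifs <;> first | omega | simp_all

lemma normalForm_monomial_mul_X_zero_mul_X_one_pow (i j k : ℕ) :
    normalForm K n b d c (monomial (ofTriple i j k) 1 * (X 0 * X 1 ^ b)) = 0 := by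
  have hmul : monomial (ofTriple i j k) 1 * (X 0 * X 1 ^ b) =
      monomial (ofTriple (i + 1) (j + b) k) (1 : K) := by
    simp only [monomial_ofTriple, map_one]; ring
  ext ⟨_ | ⟨⟨i', hi'⟩, ⟨j', hj'⟩⟩, ⟨k', hk'⟩⟩ <;>
    simp only [hmul, Pi.zero_apply, normalForm_monomial_none, normalForm_monomial_some] <;>
    split_ifs <;> first | omega | simp_all

lemma normalForm_monomial_mul_X_two_pow (i j k : ℕ) :
    normalForm K n b d c (monomial (ofTriple i j k) 1 * X 2 ^ d) = 0 := by
  have hmul : monomial (ofTriple i j k) 1 * X 2 ^ d =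
      monomial (ofTriple i j (k + d)) (1 : K) := by
    simp only [monomial_ofTriple, map_one]; ring
  ext ⟨_ | ⟨⟨i', hi'⟩, ⟨j', hj'⟩⟩, ⟨k', hk'⟩⟩ <;>
    simp only [hmul, Pi.zero_apply, normalForm_monomial_none, normalForm_monomial_some] <;>
    split_ifs <;> first | omega | simp_all

lemma normalForm_eq_zero_of_mem (hn : 1 ≤ n) {f : MvPolynomial (Fin 3) K} (hf : f ∈ J) :
    normalForm K n b d c f = 0 := by
  suffices ∀ r, normalForm K n b d c (r * f) = 0 by simpa using this 1
  induction hf using Submodule.span_induction with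
  | mem g hg =>
    rcases hg with rfl | rfl | rfl
    exacts [normalForm_mul_eq_zero_of_monomial_mul (normalForm_monomial_mul_X_one_pow_add hn),
      normalForm_mul_eq_zero_of_monomial_mul normalForm_monomial_mul_X_zero_mul_X_one_pow,
      normalForm_mul_eq_zero_of_monomial_mul normalForm_monomial_mul_X_two_pow]
  | zero => simp
  | add x y _ _ hx hy => intro r; rw [mul_add, map_add, hx, hy, add_zero]
  | smul a x _ hx => intro r; rw [smul_eq_mul, ← mul_assoc, hx]

variable (c) in
noncomputable def normalFormQuot (hn : 1 ≤ n) :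
    (MvPolynomial (Fin 3) K ⧸ J) →ₗ[K] (StdIndex n b d → K) :=
  (Submodule.restrictScalars K J).liftQ (normalForm K n b d c)
      (fun _ hf => normalForm_eq_zero_of_mem hn hf) ∘ₗ
    (Submodule.Quotient.restrictScalarsEquiv K _).symm.toLinearMap

lemma normalFormQuot_mk (hn : 1 ≤ n) (f : MvPolynomial (Fin 3) K) :
    normalFormQuot c hn (Ideal.Quotient.mk J f) = normalForm K n b d c f :=
  rfl

lemma normalForm_stdMonomial (β : StdIndex n b d) :
    normalForm K n b d c (stdMonomial K n b d β) = Pi.single β 1 := by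
  ext ⟨_ | ⟨⟨i', hi'⟩, ⟨j', hj'⟩⟩, ⟨k', hk'⟩⟩ <;> rcases β with ⟨_ | ⟨⟨i, hi⟩, ⟨j, hj⟩⟩, ⟨k, hk⟩⟩ <;>
    simp only [stdMonomial, normalForm_monomial_none, normalForm_monomial_some] <;>
    rw [Pi.single_apply] <;>
    simp only [Prod.mk.injEq, Option.some.injEq, reduceCtorEq, Fin.mk.injEq, true_and, false_and,
      ↓reduceIte] <;>
    split_ifs <;> first | omega | simp

lemma linearIndependent_mk_stdMonomial (hn : 1 ≤ n) :
    LinearIndependent K (Ideal.Quotient.mk J ∘ stdMonomial K n b d) := by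
  refine LinearIndependent.of_comp (normalFormQuot c hn) ?_
  convert (Pi.basisFun K (StdIndex n b d)).linearIndependent
  ext1 β
  simp [normalFormQuot_mk, normalForm_stdMonomial]

end NormalForm

section Spanning

lemma X_zero_pow_mem (hc : c ≠ 0) : X 0 ^ (n + 1) ∈ J := by
  have hmem : C c * X 0 ^ (n + 1) ∈ J := by
    rw [show (C c * X 0 ^ (n + 1) : MvPolynomial (Fin 3) K) =
      X 0 * (X 1 ^ (b + 1) + C c * X 0 ^ n) - X 1 * (X 0 * X 1 ^ b) by ring]
    exact sub_mem (Ideal.mul_mem_left _ _ (Ideal.subset_span (by simp)))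
      (Ideal.mul_mem_left _ _ (Ideal.subset_span (by simp)))
  simpa [← mul_assoc, ← C_mul, hc] using Ideal.mul_mem_left _ (C c⁻¹) hmem

lemma monomial_mem_milnorIdeal (hc : c ≠ 0) {i j k : ℕ}
    (h : d ≤ k ∨ n + 1 ≤ i ∨ (1 ≤ i ∧ b ≤ j)) : X 0 ^ i * X 1 ^ j * X 2 ^ k ∈ J := by
  rcases h with h | h | ⟨hi, hj⟩
  · obtain ⟨k, rfl⟩ := Nat.exists_eq_add_of_le h
    rw [show (X 0 ^ i * X 1 ^ j * X 2 ^ (d + k) : MvPolynomial (Fin 3) K) =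
      X 0 ^ i * X 1 ^ j * X 2 ^ k * X 2 ^ d by ring]
    exact Ideal.mul_mem_left _ _ (Ideal.subset_span (by simp))
  · obtain ⟨i, rfl⟩ := Nat.exists_eq_add_of_le h
    rw [show (X 0 ^ (n + 1 + i) * X 1 ^ j * X 2 ^ k : MvPolynomial (Fin 3) K) =
      X 0 ^ i * X 1 ^ j * X 2 ^ k * X 0 ^ (n + 1) by ring]
    exact Ideal.mul_mem_left _ _ (X_zero_pow_mem hc)
  · obtain ⟨i, rfl⟩ := Nat.exists_eq_add_of_le hi
    obtain ⟨j, rfl⟩ := Nat.exists_eq_add_of_le hj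
    rw [show (X 0 ^ (1 + i) * X 1 ^ (b + j) * X 2 ^ k : MvPolynomial (Fin 3) K) =
      X 0 ^ i * X 1 ^ j * X 2 ^ k * (X 0 * X 1 ^ b) by ring]
    exact Ideal.mul_mem_left _ _ (Ideal.subset_span (by simp))

lemma mk_X_one_pow_reduce (i j k : ℕ) :
    Ideal.Quotient.mk J (X 0 ^ i * X 1 ^ (j + (b + 1)) * X 2 ^ k) =
      -c • Ideal.Quotient.mk J (X 0 ^ (i + n) * X 1 ^ j * X 2 ^ k) := by
  rw [← Ideal.Quotient.mkₐ_eq_mk K, ← map_smul, Ideal.Quotient.mkₐ_eq_mk, Ideal.Quotient.eq,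
    smul_eq_C_mul, map_neg]
  rw [show (X 0 ^ i * X 1 ^ (j + (b + 1)) * X 2 ^ k - -C c * (X 0 ^ (i + n) * X 1 ^ j * X 2 ^ k) :
      MvPolynomial (Fin 3) K) = X 0 ^ i * X 1 ^ j * X 2 ^ k * (X 1 ^ (b + 1) + C c * X 0 ^ n)
      by ring]
  exact Ideal.mul_mem_left _ _ (Ideal.subset_span (by simp))

local notation "S" => Submodule.span K (Set.range (Ideal.Quotient.mk J ∘ stdMonomial K n b d))

lemma mk_mem_span_of_one_le_or_le (hc : c ≠ 0) {i j k : ℕ} (h : 1 ≤ i ∨ j ≤ b) :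
    Ideal.Quotient.mk J (X 0 ^ i * X 1 ^ j * X 2 ^ k) ∈ S := by
  by_cases hJ : d ≤ k ∨ n + 1 ≤ i ∨ (1 ≤ i ∧ b ≤ j)
  · rw [Ideal.Quotient.eq_zero_iff_mem.2 (monomial_mem_milnorIdeal hc hJ)]
    exact zero_mem _
  apply Submodule.subset_span
  by_cases hj : j < b
  · exact ⟨(some (⟨i, by omega⟩, ⟨j, hj⟩), ⟨k, by omega⟩), by simp [stdMonomial, monomial_ofTriple]⟩
  · obtain ⟨rfl, rfl⟩ : i = 0 ∧ j = b := by omega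
    exact ⟨(none, ⟨k, by omega⟩), by simp [stdMonomial, monomial_ofTriple]⟩

lemma mk_mem_span (hc : c ≠ 0) (hn : 1 ≤ n) (i j k : ℕ) :
    Ideal.Quotient.mk J (X 0 ^ i * X 1 ^ j * X 2 ^ k) ∈ S := by
  by_cases h : 1 ≤ i ∨ j ≤ b
  · exact mk_mem_span_of_one_le_or_le hc h
  obtain ⟨j, rfl⟩ : ∃ j', j = j' + (b + 1) := ⟨j - (b + 1), by omega⟩
  rw [mk_X_one_pow_reduce]
  exact Submodule.smul_mem _ _ (mk_mem_span_of_one_le_or_le hc (by omega))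

lemma span_mk_stdMonomial (hc : c ≠ 0) (hn : 1 ≤ n) : S = ⊤ := by
  refine Submodule.eq_top_iff'.2 fun q => ?_
  obtain ⟨f, rfl⟩ := Ideal.Quotient.mk_surjective q
  induction f using MvPolynomial.induction_on' with
  | monomial u a =>
    rw [← ofTriple_apply_self u, monomial_ofTriple, ← Ideal.Quotient.mkₐ_eq_mk K, ← smul_eq_C_mul,
      map_smul]
    exact Submodule.smul_mem _ _ (mk_mem_span hc hn _ _ _)
  | add p q hp hq => rw [map_add]; exact add_mem hp hq

end Spanning

theorem finrank_quotient_milnorIdeal (hc : c ≠ 0) (hn : 1 ≤ n) :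
    Module.finrank K (MvPolynomial (Fin 3) K ⧸ J) = ((n + 1) * b + 1) * d := by
  rw [Module.finrank_eq_card_basis
    (Module.Basis.mk (linearIndependent_mk_stdMonomial hn) (span_mk_stdMonomial hc hn).ge),
    card_stdIndex]

end MilnorNumber

/-- The Milnor number of `F₀ = z^5 + xy^7 + x^15` at the origin is `364`:
`ℚ[x,y,z]/(y^7 + 15x^14, 7xy^6, 5z^4)` has ℚ-dimension `364`. -/
theorem milnor_number_F0 :
    Module.finrank ℚ (MvPolynomial (Fin 3) ℚ ⧸
      Ideal.span {(X 1 : MvPolynomial (Fin 3) ℚ) ^ 7 + 15 * X 0 ^ 14,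
        7 * X 0 * X 1 ^ 6, 5 * X 2 ^ 4}) = 364 := by
  have hunit (q : ℚ) (hq : q ≠ 0) : IsUnit (C q : MvPolynomial (Fin 3) ℚ) := (IsUnit.mk0 q hq).map C
  have hideal : Ideal.span {(X 1 : MvPolynomial (Fin 3) ℚ) ^ 7 + 15 * X 0 ^ 14,
      7 * X 0 * X 1 ^ 6, 5 * X 2 ^ 4} = MilnorNumber.milnorIdeal ℚ 14 6 4 15 := by
    simp only [MilnorNumber.milnorIdeal, Ideal.span_insert, ← map_ofNat C, mul_assoc,
      Ideal.span_singleton_mul_left_unit (hunit _ (by norm_num : (7 : ℚ) ≠ 0)),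
      Ideal.span_singleton_mul_left_unit (hunit _ (by norm_num : (5 : ℚ) ≠ 0))]
  rw [hideal, MilnorNumber.finrank_quotient_milnorIdeal (by norm_num) (by norm_num)]
end

section
/- In the polynomial ring ℚ[x,y,z], with m = (x,y,z) and J = (y^7 + 15x^{14}, 7xy^6, 5z^4), one has the ideal equality m^{10}·J^2 = (x)·m^9·J^2 + (y^7 + 15x^{14}, 5z^4)·m^{10}·J; hence {x, ∂F_0/∂x, ∂F_0/∂z} is a joint reduction of (m, J, J). -/
open MvPolynomial

set_option maxHeartbeats 1000000

private lemma jr_step {R : Type*} [CommRing R] (A B : Ideal R) :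
    ∀ n : ℕ, (A + B) ^ (n + 1) ≤ A * (A + B) ^ n + B ^ (n + 1)
  | 0 => by simp
  | (n + 1) => by
    have ih := jr_step A B n
    calc (A + B) ^ (n + 2) = (A + B) ^ (n + 1) * A + (A + B) ^ (n + 1) * B := by ring
      _ ≤ (A + B) ^ (n + 1) * A + (A * (A + B) ^ n + B ^ (n + 1)) * B :=
          add_le_add le_rfl (Ideal.mul_mono_left ih)
      _ = A * (A + B) ^ (n + 1) + (A * ((A + B) ^ n * B) + B ^ (n + 2)) := by ring
      _ ≤ A * (A + B) ^ (n + 1) + (A * (A + B) ^ (n + 1) + B ^ (n + 2)) := by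
          refine add_le_add le_rfl (add_le_add (Ideal.mul_mono_right ?_) le_rfl)
          calc (A + B) ^ n * B ≤ (A + B) ^ n * (A + B) := Ideal.mul_mono_right le_sup_right
            _ = (A + B) ^ (n + 1) := by ring
      _ ≤ A * (A + B) ^ (n + 1) + B ^ (n + 2) := by
          refine sup_le le_sup_left (sup_le le_sup_left le_sup_right)

private lemma jr_split {R : Type*} [CommRing R] (Y Z : Ideal R) :
    (Y + Z) ^ 10 ≤ Z ^ 4 * (Y + Z) ^ 6 + Y ^ 7 * (Y + Z) ^ 3 := by
  have hY : Y ≤ Y + Z := le_sup_left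
  have hZ : Z ≤ Y + Z := le_sup_right
  have hcomm : Y + Z = Z + Y := by ring
  have s : ∀ n : ℕ, (Y + Z) ^ (n + 1) ≤ Z * (Y + Z) ^ n + Y ^ (n + 1) := by
    intro n
    calc (Y + Z) ^ (n + 1) = (Z + Y) ^ (n + 1) := by rw [← hcomm]
      _ ≤ Z * (Z + Y) ^ n + Y ^ (n + 1) := jr_step Z Y n
      _ = Z * (Y + Z) ^ n + Y ^ (n + 1) := by rw [← hcomm]
  have hy10 : Y ^ 10 ≤ Y ^ 7 * (Y + Z) ^ 3 := by
    calc Y ^ 10 = Y ^ 7 * Y ^ 3 := by ring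
      _ ≤ Y ^ 7 * (Y + Z) ^ 3 := Ideal.mul_mono_right (Ideal.pow_right_mono le_sup_left 3)
  have hy9 : Z * Y ^ 9 ≤ Y ^ 7 * (Y + Z) ^ 3 := by
    calc Z * Y ^ 9 = Y ^ 7 * (Y ^ 2 * Z) := by ring
      _ ≤ Y ^ 7 * ((Y + Z) ^ 2 * (Y + Z)) :=
          Ideal.mul_mono_right (Ideal.mul_mono (Ideal.pow_right_mono le_sup_left 2) le_sup_right)
      _ = Y ^ 7 * (Y + Z) ^ 3 := by ring
  have hy8 : Z ^ 2 * Y ^ 8 ≤ Y ^ 7 * (Y + Z) ^ 3 := by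
    calc Z ^ 2 * Y ^ 8 = Y ^ 7 * (Y * Z ^ 2) := by ring
      _ ≤ Y ^ 7 * ((Y + Z) * (Y + Z) ^ 2) :=
          Ideal.mul_mono_right (Ideal.mul_mono le_sup_left (Ideal.pow_right_mono le_sup_right 2))
      _ = Y ^ 7 * (Y + Z) ^ 3 := by ring
  have hy7 : Z ^ 3 * Y ^ 7 ≤ Y ^ 7 * (Y + Z) ^ 3 := by
    calc Z ^ 3 * Y ^ 7 = Y ^ 7 * Z ^ 3 := by ring
      _ ≤ Y ^ 7 * (Y + Z) ^ 3 := Ideal.mul_mono_right (Ideal.pow_right_mono le_sup_right 3)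
  calc (Y + Z) ^ 10 ≤ Z * (Y + Z) ^ 9 + Y ^ 10 := s 9
    _ ≤ Z * (Z * (Y + Z) ^ 8 + Y ^ 9) + Y ^ 10 :=
        add_le_add (Ideal.mul_mono_right (s 8)) le_rfl
    _ = Z ^ 2 * (Y + Z) ^ 8 + Z * Y ^ 9 + Y ^ 10 := by ring
    _ ≤ Z ^ 2 * (Z * (Y + Z) ^ 7 + Y ^ 8) + Z * Y ^ 9 + Y ^ 10 :=
        add_le_add (add_le_add (Ideal.mul_mono_right (s 7)) le_rfl) le_rfl
    _ = Z ^ 3 * (Y + Z) ^ 7 + Z ^ 2 * Y ^ 8 + Z * Y ^ 9 + Y ^ 10 := by ring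
    _ ≤ Z ^ 3 * (Z * (Y + Z) ^ 6 + Y ^ 7) + Z ^ 2 * Y ^ 8 + Z * Y ^ 9 + Y ^ 10 :=
        add_le_add (add_le_add (add_le_add (Ideal.mul_mono_right (s 6)) le_rfl) le_rfl) le_rfl
    _ = Z ^ 4 * (Y + Z) ^ 6 + Z ^ 3 * Y ^ 7 + Z ^ 2 * Y ^ 8 + Z * Y ^ 9 + Y ^ 10 := by ring
    _ ≤ Z ^ 4 * (Y + Z) ^ 6 + Y ^ 7 * (Y + Z) ^ 3 := by
        refine sup_le (sup_le (sup_le (sup_le le_sup_left ?_) ?_) ?_) ?_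
        · exact le_trans hy7 le_sup_right
        · exact le_trans hy8 le_sup_right
        · exact le_trans hy9 le_sup_right
        · exact le_trans hy10 le_sup_right

private lemma jr_key {R : Type*} [CommRing R] (m J Xi K G : Ideal R)
    (hKJ : K ≤ J) (hGJ : G ≤ J) (hJle : J ≤ K + G) (hG7 : G ≤ m ^ 7)
    (hm10 : m ^ 10 ≤ Xi * m ^ 9 + K * m ^ 3 + K * m ^ 6) :
    m ^ 10 * J ^ 2 ≤ Xi * m ^ 9 * J ^ 2 + K * m ^ 10 * J := by
  have hKGJ : K + G ≤ J := sup_le hKJ hGJ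
  have hJ2 : J ^ 2 ≤ K * J + G ^ 2 := by
    calc J ^ 2 = J * J := sq J
      _ ≤ (K + G) * (K + G) := Ideal.mul_mono hJle hJle
      _ = K * (K + G) + G * K + G * G := by ring
      _ ≤ K * J + G ^ 2 := by
          refine sup_le (sup_le ?_ ?_) ?_
          · exact le_trans (Ideal.mul_mono_right hKGJ) le_sup_left
          · calc G * K = K * G := mul_comm _ _
              _ ≤ K * J := Ideal.mul_mono_right hGJ
              _ ≤ K * J + G ^ 2 := le_sup_left
          · exact le_trans (le_of_eq (sq G).symm) le_sup_right
  have h310 : m ^ 3 * G ≤ m ^ 10 := by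
    calc m ^ 3 * G ≤ m ^ 3 * m ^ 7 := Ideal.mul_mono_right hG7
      _ = m ^ 10 := by rw [← pow_add]
  have h610 : m ^ 6 * G ≤ m ^ 10 := by
    calc m ^ 6 * G ≤ m ^ 6 * m ^ 7 := Ideal.mul_mono_right hG7
      _ = m ^ 13 := by rw [← pow_add]
      _ ≤ m ^ 10 := Ideal.pow_le_pow_right (by norm_num)
  have hG2J2 : G ^ 2 ≤ J ^ 2 := Ideal.pow_right_mono hGJ 2
  calc m ^ 10 * J ^ 2 ≤ m ^ 10 * (K * J + G ^ 2) := Ideal.mul_mono_right hJ2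
    _ = K * m ^ 10 * J + m ^ 10 * G ^ 2 := by ring
    _ ≤ K * m ^ 10 * J + (Xi * m ^ 9 + K * m ^ 3 + K * m ^ 6) * G ^ 2 :=
        add_le_add le_rfl (Ideal.mul_mono_left hm10)
    _ = K * m ^ 10 * J + (Xi * m ^ 9 * G ^ 2 + (K * ((m ^ 3 * G) * G) + K * ((m ^ 6 * G) * G))) := by
        ring
    _ ≤ Xi * m ^ 9 * J ^ 2 + K * m ^ 10 * J := by
        refine sup_le le_sup_right (sup_le ?_ (sup_le ?_ ?_))
        · exact le_trans (Ideal.mul_mono_right hG2J2) le_sup_left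
        · refine le_trans ?_ le_sup_right
          calc K * ((m ^ 3 * G) * G) ≤ K * (m ^ 10 * J) := by
                exact Ideal.mul_mono_right (Ideal.mul_mono h310 hGJ)
            _ = K * m ^ 10 * J := by ring
        · refine le_trans ?_ le_sup_right
          calc K * ((m ^ 6 * G) * G) ≤ K * (m ^ 10 * J) := by
                exact Ideal.mul_mono_right (Ideal.mul_mono h610 hGJ)
            _ = K * m ^ 10 * J := by ring

/-- Joint reduction identity for `F₀ = z^5 + xy^7 + x^15`:
`m^10·J² = (x)·m⁹·J² + (∂F₀/∂x, ∂F₀/∂z)·m^10·J` in `ℚ[x,y,z]`. -/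
theorem joint_reduction_F0
    (m J : Ideal (MvPolynomial (Fin 3) ℚ))
    (hm : m = Ideal.span {X 0, X 1, X 2})
    (hJ : J = Ideal.span {(X 1 : MvPolynomial (Fin 3) ℚ) ^ 7 + 15 * X 0 ^ 14,
      7 * X 0 * X 1 ^ 6, 5 * X 2 ^ 4}) :
    m ^ 10 * J ^ 2 =
      Ideal.span {(X 0 : MvPolynomial (Fin 3) ℚ)} * m ^ 9 * J ^ 2 +
      Ideal.span {(X 1 : MvPolynomial (Fin 3) ℚ) ^ 7 + 15 * X 0 ^ 14, 5 * X 2 ^ 4} *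
        m ^ 10 * J := by
  set x : MvPolynomial (Fin 3) ℚ := X 0 with hx
  set y : MvPolynomial (Fin 3) ℚ := X 1 with hy
  set z : MvPolynomial (Fin 3) ℚ := X 2 with hz
  set f : MvPolynomial (Fin 3) ℚ := y ^ 7 + 15 * x ^ 14 with hfdef
  set g : MvPolynomial (Fin 3) ℚ := 7 * x * y ^ 6 with hgdef
  set w : MvPolynomial (Fin 3) ℚ := 5 * z ^ 4 with hwdef
  set Xi : Ideal (MvPolynomial (Fin 3) ℚ) := Ideal.span {x} with hXi
  set Yi : Ideal (MvPolynomial (Fin 3) ℚ) := Ideal.span {y} with hYi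
  set Zi : Ideal (MvPolynomial (Fin 3) ℚ) := Ideal.span {z} with hZi
  set K : Ideal (MvPolynomial (Fin 3) ℚ) := Ideal.span {f, w} with hK
  set G : Ideal (MvPolynomial (Fin 3) ℚ) := Ideal.span {g} with hG
  set N : Ideal (MvPolynomial (Fin 3) ℚ) := Yi + Zi with hN
  -- basic memberships
  have hxm : x ∈ m := by rw [hm]; exact Ideal.subset_span (by simp)
  have hym : y ∈ m := by rw [hm]; exact Ideal.subset_span (by simp)
  have hzm : z ∈ m := by rw [hm]; exact Ideal.subset_span (by simp)
  have hXm : Xi ≤ m := by rw [hXi, Ideal.span_le]; simpa using hxm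
  have hYN : Yi ≤ N := le_sup_left
  have hZN : Zi ≤ N := le_sup_right
  have hNm : N ≤ m := by
    refine sup_le ?_ ?_
    · rw [hYi, Ideal.span_le]; simpa using hym
    · rw [hZi, Ideal.span_le]; simpa using hzm
  have hmXN : m = Xi + N := by
    rw [hm, hN, hXi, hYi, hZi]
    rw [Ideal.span_insert, Ideal.span_insert]
    simp only [Ideal.add_eq_sup]
  have hKJ : K ≤ J := by
    rw [hK, hJ, Ideal.span_le]
    intro a ha
    simp only [Set.mem_insert_iff, Set.mem_singleton_iff] at ha
    rcases ha with rfl | rfl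
    · exact Ideal.subset_span (by simp)
    · exact Ideal.subset_span (by simp)
  have hGJ : G ≤ J := by
    rw [hG, hJ, Ideal.span_le]
    intro a ha
    simp only [Set.mem_singleton_iff] at ha
    subst ha
    exact Ideal.subset_span (by simp)
  have hfK : f ∈ K := Ideal.subset_span (by simp)
  have hwK : w ∈ K := Ideal.subset_span (by simp)
  have hgG : g ∈ G := Ideal.mem_span_singleton_self g
  have hJle : J ≤ K + G := by
    rw [hJ, Ideal.span_le]
    intro a ha
    simp only [Set.mem_insert_iff, Set.mem_singleton_iff] at ha
    rcases ha with rfl | rfl | rfl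
    · exact Submodule.mem_sup_left hfK
    · exact Submodule.mem_sup_right hgG
    · exact Submodule.mem_sup_left hwK
  have hG7 : G ≤ m ^ 7 := by
    rw [hG, Ideal.span_le]
    intro a ha
    simp only [Set.mem_singleton_iff] at ha
    subst ha
    have h1 : x * y ^ 6 ∈ m * m ^ 6 := Ideal.mul_mem_mul hxm (Ideal.pow_mem_pow hym 6)
    rw [← pow_succ'] at h1
    have h2 : (7 : MvPolynomial (Fin 3) ℚ) * (x * y ^ 6) ∈ m ^ 7 :=
      Ideal.mul_mem_left _ _ h1
    simpa [hgdef, mul_assoc] using h2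
  -- z^4 ∈ K
  have hZ4K : Zi ^ 4 ≤ K := by
    rw [hZi, Ideal.span_singleton_pow, Ideal.span_le]
    intro a ha
    simp only [Set.mem_singleton_iff] at ha
    subst ha
    have h5 : z ^ 4 = C (1/5 : ℚ) * w := by
      rw [hwdef, show (5 : MvPolynomial (Fin 3) ℚ) = C 5 from (map_ofNat C 5).symm,
        ← mul_assoc, ← C_mul]
      norm_num
    rw [h5]
    exact Ideal.mul_mem_left _ _ hwK
  -- y^7 ∈ K + Xi^14
  have hY7 : Yi ^ 7 ≤ K + Xi ^ 14 := by
    rw [hYi, Ideal.span_singleton_pow, Ideal.span_le]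
    intro a ha
    simp only [Set.mem_singleton_iff] at ha
    subst ha
    have hx14 : (-15 : MvPolynomial (Fin 3) ℚ) * x ^ 14 ∈ Xi ^ 14 := by
      refine Ideal.mul_mem_left _ _ ?_
      exact Ideal.pow_mem_pow (Ideal.mem_span_singleton_self x) 14
    have hsum : f + (-15) * x ^ 14 ∈ K + Xi ^ 14 := Submodule.add_mem_sup hfK hx14
    have : y ^ 7 = f + (-15) * x ^ 14 := by rw [hfdef]; ring
    rwa [this]
  -- the main bound m^10 ≤ Xi*m^9 + K*m^3 + K*m^6
  have hm10 : m ^ 10 ≤ Xi * m ^ 9 + K * m ^ 3 + K * m ^ 6 := by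
    have hT1 : Xi * m ^ 9 ≤ Xi * m ^ 9 + K * m ^ 3 + K * m ^ 6 :=
      le_trans le_sup_left le_sup_left
    have hT2 : K * m ^ 3 ≤ Xi * m ^ 9 + K * m ^ 3 + K * m ^ 6 :=
      le_trans le_sup_right le_sup_left
    have hT3 : K * m ^ 6 ≤ Xi * m ^ 9 + K * m ^ 3 + K * m ^ 6 := le_sup_right
    have hN10 : N ^ 10 ≤ Xi * m ^ 9 + K * m ^ 3 + K * m ^ 6 := by
      have h1 : N ^ 10 ≤ Zi ^ 4 * N ^ 6 + Yi ^ 7 * N ^ 3 := by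
        rw [hN]; exact jr_split Yi Zi
      refine le_trans h1 (sup_le ?_ ?_)
      · -- Zi^4 * N^6 ≤ K * m^6
        refine le_trans ?_ hT3
        exact Ideal.mul_mono hZ4K (Ideal.pow_right_mono hNm 6)
      · -- Yi^7 * N^3 ≤ (K + Xi^14) * N^3
        calc Yi ^ 7 * N ^ 3 ≤ (K + Xi ^ 14) * m ^ 3 :=
              Ideal.mul_mono hY7 (Ideal.pow_right_mono hNm 3)
          _ = K * m ^ 3 + Xi * (Xi ^ 13 * m ^ 3) := by ring
          _ ≤ Xi * m ^ 9 + K * m ^ 3 + K * m ^ 6 := by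
              refine sup_le hT2 (le_trans ?_ hT1)
              refine Ideal.mul_mono_right ?_
              calc Xi ^ 13 * m ^ 3 ≤ m ^ 13 * m ^ 3 :=
                    Ideal.mul_mono_left (Ideal.pow_right_mono hXm 13)
                _ = m ^ 16 := by rw [← pow_add]
                _ ≤ m ^ 9 := Ideal.pow_le_pow_right (by norm_num)
    calc m ^ 10 = (Xi + N) ^ 10 := by rw [← hmXN]
      _ ≤ Xi * (Xi + N) ^ 9 + N ^ 10 := jr_step Xi N 9
      _ = Xi * m ^ 9 + N ^ 10 := by rw [← hmXN]
      _ ≤ Xi * m ^ 9 + K * m ^ 3 + K * m ^ 6 := sup_le hT1 hN10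
  refine le_antisymm ?_ ?_
  · exact jr_key m J Xi K G hKJ hGJ hJle hG7 hm10
  · refine sup_le ?_ ?_
    · -- Xi * m^9 * J^2 ≤ m^10 * J^2
      calc Xi * m ^ 9 * J ^ 2 ≤ m * m ^ 9 * J ^ 2 :=
          Ideal.mul_mono_left (Ideal.mul_mono_left hXm)
        _ = m ^ 10 * J ^ 2 := by rw [← pow_succ']
    · -- K * m^10 * J ≤ m^10 * J^2
      calc K * m ^ 10 * J ≤ J * m ^ 10 * J :=
          Ideal.mul_mono_left (Ideal.mul_mono_left hKJ)
        _ = m ^ 10 * J ^ 2 := by ring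
end

section
/- Let K = ℚ(t). The quotient ring K[x,y,z]/(x, 6ty^5z + 7xy^6, 5z^4 + ty^6) is a K-vector space of dimension 26; consequently the second sectional Milnor number e_2(m | J(F_t)) of F_t = z^5 + ty^6z + xy^7 + x^{15} equals 26, which differs from the value 28 at t = 0 although the Milnor number 364 is the same — disproving Teissier's conjecture. -/
/-!
Modulo the ideal, `x = 0`, so `∂F/∂y` gives `y^5 z = 0` (as `t ≠ 0`) and `∂F/∂z` gives
`z^4 = -(t/5) y^6`; hence also `y^11 = -(5/t) y^5 z^4 = 0`. Every monomial is therefore congruent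
to a multiple of one of the 26 monomials `y^a z^r` with `r ≤ 3` and `a ≤ 10` if `r = 0`, `a ≤ 4`
otherwise. This reduction, extended linearly, kills every monomial multiple of each generator,
hence the whole ideal, so the quotient is isomorphic to the span of those 26 monomials.
-/

open MvPolynomial

theorem Ideal.finrank_quotient_eq_finrank_range {K R : Type*} [CommRing K] [CommRing R]
    [Algebra K R] (I : Ideal R) (L : R →ₗ[K] R) (hL : ∀ p ∈ I, L p = 0)
    (hI : ∀ p, p - L p ∈ I) : Module.finrank K (R ⧸ I) = Module.finrank K (LinearMap.range L) := by
  have hker : LinearMap.ker L = I.restrictScalars K := by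
    ext p
    refine ⟨fun hp => ?_, hL p⟩
    simpa [LinearMap.mem_ker.mp hp] using hI p
  exact ((Submodule.Quotient.restrictScalarsEquiv K I).symm ≪≫ₗ
    Submodule.quotEquivOfEq _ _ hker.symm ≪≫ₗ L.quotKerEquivRange).finrank_eq

theorem MvPolynomial.linearMap_eq_zero_of_mem_ideal_span {σ R M : Type*} [CommSemiring R]
    [AddCommMonoid M] [Module R M] {L : MvPolynomial σ R →ₗ[R] M} {s : Set (MvPolynomial σ R)}
    (h : ∀ d, ∀ g ∈ s, L (monomial d 1 * g) = 0) {p : MvPolynomial σ R}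
    (hp : p ∈ Ideal.span s) : L p = 0 := by
  suffices ∀ q, L (q * p) = 0 by simpa using this 1
  induction hp using Submodule.span_induction with
  | mem g hg =>
    intro q
    induction q using MvPolynomial.induction_on' with
    | monomial d k =>
      rw [show monomial d k = k • monomial d 1 by rw [smul_monomial, smul_eq_mul, mul_one],
        smul_mul_assoc, map_smul, h d g hg, smul_zero]
    | add q₁ q₂ h₁ h₂ => rw [add_mul, map_add, h₁, h₂, add_zero]
  | zero => simp
  | add p₁ p₂ _ _ h₁ h₂ => intro q; rw [mul_add, map_add, h₁, h₂, add_zero]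
  | smul a p _ h => intro q; rw [smul_eq_mul, ← mul_assoc, h]

noncomputable section

namespace TeissierCounterexample

def IsStandard (a r : ℕ) : Prop := r < 4 ∧ a < if r = 0 then 11 else 5

instance (a r : ℕ) : Decidable (IsStandard a r) := inferInstanceAs (Decidable (_ ∧ _))

theorem pow_mul_pow_eq_zero_of_not_isStandard {A : Type*} [CommMonoidWithZero A] {y z : A}
    (hyz : y ^ 5 * z = 0) (hy : y ^ 11 = 0) {a r : ℕ} (hr : r < 4) (h : ¬IsStandard a r) :
    y ^ a * z ^ r = 0 := by
  unfold IsStandard at h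
  rcases Nat.eq_zero_or_pos r with rfl | hr0
  · obtain ⟨k, rfl⟩ : ∃ k, a = k + 11 := ⟨a - 11, by simp at h; omega⟩
    rw [pow_add, hy, mul_zero, zero_mul]
  · obtain ⟨k, rfl⟩ : ∃ k, a = k + 5 := ⟨a - 5, by simp [hr0.ne'] at h; omega⟩
    obtain ⟨l, rfl⟩ : ∃ l, r = l + 1 := ⟨r - 1, by omega⟩
    rw [pow_add, pow_succ z, mul_mul_mul_comm, hyz, mul_zero]

def staircase : Finset (ℕ × ℕ) :=
  (Finset.range 11 ×ˢ Finset.range 4).filter fun p => IsStandard p.1 p.2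

theorem card_staircase : staircase.card = 26 := by decide

theorem mem_staircase {p : ℕ × ℕ} : p ∈ staircase ↔ IsStandard p.1 p.2 := by
  simp only [staircase, Finset.mem_filter, Finset.mem_product, Finset.mem_range,
    and_iff_right_iff_imp]
  intro h
  unfold IsStandard at h
  split_ifs at h <;> omega

theorem pow_eq_smul_of_pow_four {K A : Type*} [CommSemiring K] [CommSemiring A] [Algebra K A]
    {y z : A} {c : K} (h : z ^ 4 = c • y ^ 6) (b : ℕ) :
    z ^ b = c ^ (b / 4) • (y ^ (6 * (b / 4)) * z ^ (b % 4)) := by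
  conv_lhs => rw [← Nat.div_add_mod b 4, pow_add, pow_mul, h, smul_pow, ← pow_mul, smul_mul_assoc]

theorem monomial_one_fin_three {K : Type*} [CommSemiring K] (d : Fin 3 →₀ ℕ) :
    monomial d (1 : K) = X 0 ^ d 0 * X 1 ^ d 1 * X 2 ^ d 2 := by
  rw [monomial_eq, C_1, one_mul, Finsupp.prod_fintype _ _ (fun _ => pow_zero _),
    Fin.prod_univ_three]

def expYZ (a r : ℕ) : Fin 3 →₀ ℕ := Finsupp.single 1 a + Finsupp.single 2 r

@[simp] theorem expYZ_apply_zero (a r : ℕ) : expYZ a r 0 = 0 := by simp [expYZ]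
@[simp] theorem expYZ_apply_one (a r : ℕ) : expYZ a r 1 = a := by simp [expYZ]
@[simp] theorem expYZ_apply_two (a r : ℕ) : expYZ a r 2 = r := by simp [expYZ]

theorem expYZ_injective : Function.Injective fun p : ℕ × ℕ => expYZ p.1 p.2 := by
  intro p q h
  have h1 := DFunLike.congr_fun h 1
  have h2 := DFunLike.congr_fun h 2
  simp only [expYZ_apply_one, expYZ_apply_two] at h1 h2
  exact Prod.ext h1 h2

def standardExps : Finset (Fin 3 →₀ ℕ) := staircase.image fun p => expYZ p.1 p.2

theorem card_standardExps : standardExps.card = 26 := by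
  rw [standardExps, Finset.card_image_of_injective _ expYZ_injective, card_staircase]

variable {K : Type*} [Field K] (t : K)

-- `∂F/∂y` and `∂F/∂z` for `F = z^5 + t y^6 z + x y^7 + x^15`, with `(x, y, z) = (X 0, X 1, X 2)`
def partialDerivY : MvPolynomial (Fin 3) K := 6 * C t * X 1 ^ 5 * X 2 + 7 * X 0 * X 1 ^ 6

def partialDerivZ : MvPolynomial (Fin 3) K := 5 * X 2 ^ 4 + C t * X 1 ^ 6

def jointReductionIdeal : Ideal (MvPolynomial (Fin 3) K) :=
  Ideal.span {X 0, partialDerivY t, partialDerivZ t}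

theorem monomial_one_mul_partialDerivY (d : Fin 3 →₀ ℕ) :
    monomial d 1 * partialDerivY t =
      monomial (d + expYZ 5 1) (6 * t) +
        monomial (d + Finsupp.single 0 1 + Finsupp.single 1 6) 7 := by
  simp only [partialDerivY, X_pow_eq_monomial, ← map_ofNat C]
  simp only [X, expYZ, ← C_mul, C_mul_monomial, monomial_mul, mul_add, mul_one, one_mul, add_assoc]

theorem monomial_one_mul_partialDerivZ (d : Fin 3 →₀ ℕ) :
    monomial d 1 * partialDerivZ t =
      monomial (d + Finsupp.single 2 4) 5 + monomial (d + Finsupp.single 1 6) t := by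
  simp only [partialDerivZ, X_pow_eq_monomial, ← map_ofNat C, C_mul_monomial, monomial_mul, mul_add,
    mul_one, one_mul]

def normalFormMonomial (d : Fin 3 →₀ ℕ) : MvPolynomial (Fin 3) K :=
  if d 0 = 0 ∧ IsStandard (d 1 + 6 * (d 2 / 4)) (d 2 % 4) then
    (-(t / 5)) ^ (d 2 / 4) • monomial (expYZ (d 1 + 6 * (d 2 / 4)) (d 2 % 4)) 1
  else 0

def normalForm : MvPolynomial (Fin 3) K →ₗ[K] MvPolynomial (Fin 3) K :=
  (basisMonomials (Fin 3) K).constr K (normalFormMonomial t)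

theorem normalForm_monomial (d : Fin 3 →₀ ℕ) (k : K) :
    normalForm t (monomial d k) = k • normalFormMonomial t d := by
  rw [show monomial d k = k • monomial d 1 by rw [smul_monomial, smul_eq_mul, mul_one], map_smul]
  exact congrArg _ ((basisMonomials (Fin 3) K).constr_basis K _ d)

theorem normalFormMonomial_of_ne_zero {d : Fin 3 →₀ ℕ} (h : d 0 ≠ 0) :
    normalFormMonomial t d = 0 :=
  if_neg fun h' => h h'.1

theorem normalFormMonomial_add_expYZ_five_one (d : Fin 3 →₀ ℕ) :
    normalFormMonomial t (d + expYZ 5 1) = 0 := by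
  refine if_neg fun ⟨_, h⟩ => ?_
  simp only [Finsupp.add_apply, expYZ_apply_one, expYZ_apply_two, IsStandard] at h
  split_ifs at h <;> omega

theorem normalFormMonomial_add_single_two_four (d : Fin 3 →₀ ℕ) :
    normalFormMonomial t (d + Finsupp.single 2 4) =
      (-(t / 5)) • normalFormMonomial t (d + Finsupp.single 1 6) := by
  simp only [normalFormMonomial, Finsupp.add_apply, Finsupp.single_apply]
  simp only [Fin.reduceEq, if_true, if_false, add_zero]
  rw [Nat.add_div_right _ four_pos, Nat.add_mod_right, mul_add, mul_one, ← add_assoc,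
    add_right_comm (d 1)]
  split_ifs
  · rw [pow_succ', mul_smul]
  · rw [smul_zero]

theorem normalFormMonomial_expYZ {a r : ℕ} (h : IsStandard a r) :
    normalFormMonomial t (expYZ a r) = monomial (expYZ a r) 1 := by
  have hr : r / 4 = 0 ∧ r % 4 = r := ⟨Nat.div_eq_of_lt h.1, Nat.mod_eq_of_lt h.1⟩
  simp [normalFormMonomial, hr, h]

theorem normalFormMonomial_mem_restrictSupport (d : Fin 3 →₀ ℕ) :
    normalFormMonomial t d ∈ restrictSupport K standardExps := by
  unfold normalFormMonomial
  split_ifs with h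
  · refine Submodule.smul_mem _ _ ((monomial_mem_restrictSupport (R := K)).mpr (Or.inl ?_))
    exact Finset.mem_image.mpr ⟨(_, _), mem_staircase.mpr h.2, rfl⟩
  · exact zero_mem _

theorem range_normalForm :
    LinearMap.range (normalForm t) = restrictSupport K standardExps := by
  apply le_antisymm
  · rintro _ ⟨p, rfl⟩
    induction p using MvPolynomial.induction_on' with
    | monomial d k =>
      rw [normalForm_monomial]
      exact Submodule.smul_mem _ _ (normalFormMonomial_mem_restrictSupport t d)
    | add p q hp hq => rw [map_add]; exact add_mem hp hq
  · rw [restrictSupport_eq_span, Submodule.span_le]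
    rintro _ ⟨e, he, rfl⟩
    obtain ⟨⟨a, r⟩, hs, rfl⟩ := Finset.mem_image.mp he
    exact ⟨monomial (expYZ a r) 1, by
      rw [normalForm_monomial, one_smul, normalFormMonomial_expYZ t (mem_staircase.mp hs)]⟩

local notation "π" => Ideal.Quotient.mkₐ K (jointReductionIdeal t)

theorem mkₐ_X_zero : π (X 0) = 0 :=
  Ideal.Quotient.eq_zero_iff_mem.mpr (Ideal.subset_span (by simp))

theorem mkₐ_partialDerivY : π (partialDerivY t) = 0 :=
  Ideal.Quotient.eq_zero_iff_mem.mpr (Ideal.subset_span (by simp))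

theorem mkₐ_partialDerivZ : π (partialDerivZ t) = 0 :=
  Ideal.Quotient.eq_zero_iff_mem.mpr (Ideal.subset_span (by simp))

variable [CharZero K]

theorem mkₐ_X_two_pow_four : π (X 2) ^ 4 = (-(t / 5)) • π (X 1) ^ 6 := by
  have h := mkₐ_partialDerivZ t
  simp only [partialDerivZ, map_add, map_mul, map_pow, map_ofNat, algHom_C] at h
  rw [← map_ofNat (algebraMap K _) 5, ← Algebra.smul_def, ← Algebra.smul_def] at h
  calc π (X 2) ^ 4 = (5 : K)⁻¹ • (5 : K) • π (X 2) ^ 4 := by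
        rw [smul_smul, inv_mul_cancel₀ (by norm_num), one_smul]
    _ = (-(t / 5)) • π (X 1) ^ 6 := by
        rw [eq_neg_of_add_eq_zero_left h, smul_neg, smul_smul, neg_smul, div_eq_inv_mul]

theorem mkₐ_X_one_pow_five_mul_X_two (ht : t ≠ 0) : π (X 1) ^ 5 * π (X 2) = 0 := by
  have h := mkₐ_partialDerivY t
  simp only [partialDerivY, map_add, map_mul, map_pow, map_ofNat, algHom_C, mkₐ_X_zero, mul_zero,
    zero_mul, add_zero, mul_assoc] at h
  rw [← map_ofNat (algebraMap K _) 6, ← mul_assoc, ← map_mul, ← Algebra.smul_def] at h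
  exact (smul_eq_zero.mp h).resolve_left (mul_ne_zero (by norm_num) ht)

theorem mkₐ_X_one_pow_eleven (ht : t ≠ 0) : π (X 1) ^ 11 = 0 := by
  have hc : -(t / 5) ≠ 0 := neg_ne_zero.mpr (div_ne_zero ht (by norm_num))
  calc π (X 1) ^ 11 = (-(t / 5))⁻¹ • (π (X 1) ^ 5 * ((-(t / 5)) • π (X 1) ^ 6)) := by
        rw [mul_smul_comm, smul_smul, inv_mul_cancel₀ hc, one_smul, ← pow_add]
    _ = (-(t / 5))⁻¹ • (π (X 1) ^ 5 * π (X 2) * π (X 2) ^ 3) := by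
        rw [← mkₐ_X_two_pow_four, mul_assoc, ← pow_succ']
    _ = 0 := by rw [mkₐ_X_one_pow_five_mul_X_two t ht, zero_mul, smul_zero]

theorem mkₐ_monomial (ht : t ≠ 0) (d : Fin 3 →₀ ℕ) :
    π (monomial d 1) = π (normalFormMonomial t d) := by
  rw [monomial_one_fin_three, map_mul, map_mul, map_pow, map_pow, map_pow, mkₐ_X_zero,
    normalFormMonomial]
  rcases eq_or_ne (d 0) 0 with h0 | h0
  · rw [h0, pow_zero, one_mul, pow_eq_smul_of_pow_four (mkₐ_X_two_pow_four t) (d 2),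
      mul_smul_comm, ← mul_assoc, ← pow_add]
    by_cases hs : IsStandard (d 1 + 6 * (d 2 / 4)) (d 2 % 4)
    · rw [if_pos ⟨rfl, hs⟩, map_smul, monomial_one_fin_three]
      simp
    · rw [if_neg (fun h => hs h.2), map_zero, pow_mul_pow_eq_zero_of_not_isStandard
        (mkₐ_X_one_pow_five_mul_X_two t ht) (mkₐ_X_one_pow_eleven t ht)
        (Nat.mod_lt _ (by norm_num)) hs, smul_zero]
  · rw [zero_pow h0, zero_mul, zero_mul, if_neg (fun h => h0 h.1), map_zero]

theorem mkₐ_normalForm (ht : t ≠ 0) (p : MvPolynomial (Fin 3) K) : π (normalForm t p) = π p := by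
  induction p using MvPolynomial.induction_on' with
  | monomial d k =>
    rw [normalForm_monomial, map_smul, ← mkₐ_monomial t ht, ← map_smul, smul_monomial, smul_eq_mul,
      mul_one]
  | add p q hp hq => rw [map_add, map_add, hp, hq, map_add]

theorem sub_normalForm_mem (ht : t ≠ 0) (p : MvPolynomial (Fin 3) K) :
    p - normalForm t p ∈ jointReductionIdeal t :=
  Ideal.Quotient.eq.mp (mkₐ_normalForm t ht p).symm

theorem normalForm_eq_zero_of_mem {p : MvPolynomial (Fin 3) K} (hp : p ∈ jointReductionIdeal t) :
    normalForm t p = 0 := by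
  refine linearMap_eq_zero_of_mem_ideal_span (fun d g hg => ?_) hp
  simp only [Set.mem_insert_iff, Set.mem_singleton_iff] at hg
  rcases hg with rfl | rfl | rfl
  · rw [X, monomial_mul, one_mul, normalForm_monomial, normalFormMonomial_of_ne_zero t (by simp),
      smul_zero]
  · rw [monomial_one_mul_partialDerivY, map_add, normalForm_monomial, normalForm_monomial,
      normalFormMonomial_add_expYZ_five_one, normalFormMonomial_of_ne_zero t (by simp), smul_zero,
      smul_zero, add_zero]
  · rw [monomial_one_mul_partialDerivZ, map_add, normalForm_monomial, normalForm_monomial,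
      normalFormMonomial_add_single_two_four, smul_smul, ← add_smul,
      show (5 : K) * -(t / 5) + t = 0 by ring, zero_smul]

theorem finrank_quotient_jointReductionIdeal (ht : t ≠ 0) :
    Module.finrank K (MvPolynomial (Fin 3) K ⧸ jointReductionIdeal t) = 26 := by
  rw [Ideal.finrank_quotient_eq_finrank_range _ (normalForm t)
    (fun _ => normalForm_eq_zero_of_mem t) (sub_normalForm_mem t ht), range_normalForm,
    Module.finrank_eq_card_basis (basisRestrictSupport K _)]
  simpa using card_standardExps

end TeissierCounterexample

end

open MvPolynomial in
/-- Over `K = ℚ(t)`, the second sectional Milnor number of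
`F_t = z^5 + ty^6z + xy^7 + x^15` is `26`:
`K[x,y,z]/(x, 6ty^5z + 7xy^6, 5z^4 + ty^6)` has `K`-dimension `26`. -/
theorem sectional_milnor_Ft :
    Module.finrank (RatFunc ℚ) (MvPolynomial (Fin 3) (RatFunc ℚ) ⧸
      Ideal.span {(X 0 : MvPolynomial (Fin 3) (RatFunc ℚ)),
        6 * C RatFunc.X * X 1 ^ 5 * X 2 + 7 * X 0 * X 1 ^ 6,
        5 * X 2 ^ 4 + C RatFunc.X * X 1 ^ 6}) = 26 :=
  TeissierCounterexample.finrank_quotient_jointReductionIdeal _ RatFunc.X_ne_zero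
end
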